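/- For real numbers q, q', the rotations by 6·arg(-1+(1-2q)√3 i) and 6·arg(-1+(1-2q')√3 i) are mutually inverse (i.e. the product of the unit complex sixth powers equals 1) if and only if q' = 1-q, or q' = (2q-1)/(3q-2) (when q ≠ 2/3), or q' = q/(3q-1) (when q ≠ 1/3). -/

import Mathlib

open Complex Real

/-- The complex number whose argument (times 6) gives the rotation angle of `T_q`. -/
noncomputable def zq (q : ℝ) : ℂ := -1 + ((1 - 2 * q : ℝ) : ℂ) * (Real.sqrt 3 : ℂ) * Complex.I

/-! With `z = zq q * zq q'`, the unit number `(z / ‖z‖) ^ 6` is `1` exactly when `z ^ 3` is real,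
and `Im (z ^ 3)` factors as `-96 √3 (1 - q - q') (3qq' - 2q - 2q' + 1) (3qq' - q - q')`. Each factor
vanishes exactly on one of the three branches, the last two being Möbius involutions `q ↦ q'`. -/

namespace Complex

theorem div_norm_sq_eq_one_iff {w : ℂ} (hw : w ≠ 0) : (w / ‖w‖) ^ 2 = 1 ↔ w.im = 0 := by
  have hnorm : ((‖w‖ : ℝ) : ℂ) ^ 2 ≠ 0 := by simpa using hw
  rw [div_pow, div_eq_one_iff_eq hnorm, ← mul_conj', sq, mul_right_inj' hw, eq_comm,
    conj_eq_iff_im]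

theorem div_norm_pow_two_mul_eq_one_iff {z : ℂ} (hz : z ≠ 0) (n : ℕ) :
    (z / ‖z‖) ^ (2 * n) = 1 ↔ (z ^ n).im = 0 := by
  rw [← div_norm_sq_eq_one_iff (pow_ne_zero n hz), mul_comm, pow_mul, div_pow, norm_pow,
    ofReal_pow]

theorem im_pow_three (z : ℂ) : (z ^ 3).im = 3 * z.re ^ 2 * z.im - z.im ^ 3 := by
  simp only [pow_succ, pow_zero, one_mul, mul_re, mul_im]; ring

end Complex

theorem zq_re (q : ℝ) : (zq q).re = -1 := by simp [zq]

theorem zq_im (q : ℝ) : (zq q).im = (1 - 2 * q) * √3 := by simp [zq]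

theorem zq_ne_zero (q : ℝ) : zq q ≠ 0 := fun h => by simpa [zq_re] using congrArg re h

theorem im_zq_mul_zq_pow_three (q q' : ℝ) :
    ((zq q * zq q') ^ 3).im =
      -96 * √3 * ((1 - q - q') * (3 * q * q' - 2 * q - 2 * q' + 1) * (3 * q * q' - q - q')) := by
  have h3 : √3 ^ 2 = 3 := sq_sqrt (by norm_num)
  have hre : (zq q * zq q').re = 1 - 3 * (1 - 2 * q) * (1 - 2 * q') := by
    rw [mul_re, zq_re, zq_re, zq_im, zq_im]
    linear_combination -(1 - 2 * q) * (1 - 2 * q') * h3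
  have him : (zq q * zq q').im = -(2 - 2 * q - 2 * q') * √3 := by
    rw [mul_im, zq_re, zq_re, zq_im, zq_im]
    ring
  rw [im_pow_three, hre, him]
  linear_combination (2 - 2 * q - 2 * q') ^ 3 * √3 * h3

theorem three_mul_mul_sub_sub_eq_zero_iff (q q' : ℝ) :
    3 * q * q' - q - q' = 0 ↔ q ≠ 1 / 3 ∧ q' = q / (3 * q - 1) := by
  constructor
  · intro h
    have hq : q ≠ 1 / 3 := by rintro rfl; linarith
    refine ⟨hq, ?_⟩
    rw [eq_div_iff (by contrapose! hq; linarith)]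
    linarith
  · rintro ⟨hq, rfl⟩
    have : 3 * q - 1 ≠ 0 := by contrapose! hq; linarith
    field_simp
    ring

theorem three_mul_mul_sub_two_mul_sub_two_mul_add_one_eq_zero_iff (q q' : ℝ) :
    3 * q * q' - 2 * q - 2 * q' + 1 = 0 ↔ q ≠ 2 / 3 ∧ q' = (2 * q - 1) / (3 * q - 2) := by
  constructor
  · intro h
    have hq : q ≠ 2 / 3 := by rintro rfl; linarith
    refine ⟨hq, ?_⟩
    rw [eq_div_iff (by contrapose! hq; linarith)]
    linarith
  · rintro ⟨hq, rfl⟩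
    have : 3 * q - 2 ≠ 0 := by contrapose! hq; linarith
    field_simp
    ring

theorem stmt4 (q q' : ℝ) :
    ((zq q * zq q') / (‖zq q * zq q'‖ : ℝ)) ^ 6 = 1 ↔
      q' = 1 - q ∨ (q ≠ 2 / 3 ∧ q' = (2 * q - 1) / (3 * q - 2)) ∨
        (q ≠ 1 / 3 ∧ q' = q / (3 * q - 1)) := by
  have hz : zq q * zq q' ≠ 0 := mul_ne_zero (zq_ne_zero q) (zq_ne_zero q')
  have hc : -96 * √3 ≠ 0 := by positivity
  rw [show 6 = 2 * 3 from rfl, div_norm_pow_two_mul_eq_one_iff hz, im_zq_mul_zq_pow_three,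
    mul_eq_zero_iff_left hc, mul_eq_zero, mul_eq_zero, or_assoc,
    three_mul_mul_sub_two_mul_sub_two_mul_add_one_eq_zero_iff, three_mul_mul_sub_sub_eq_zero_iff]
  exact or_congr_left ⟨fun h => by linarith, fun h => by linarith⟩
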